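/- arXiv:1703.07914 — 10 statements merged into one kernel-verified Lean document; each statement's English description precedes it below -/
import Mathlib

section
/- Fix positive integers k and T and a real matrix A ∈ ℝ^{k×T}. Define f(Y, M) := Tr(−(4/T)·Aᵀ·Y + (2/T)·Yᵀ·M·Y) − Tr(Mᵀ·M) for Y ∈ ℝ^{k×T} and M ∈ ℝ^{k×k}. Let B be any positive semidefinite k×k real matrix with B³ = (1/T)·A·Aᵀ. Then the strong min-max property holds: inf over Y of sup over M of f(Y, M) equals sup over M of inf over Y of f(Y, M), and both equal −3·Tr(B²) (equivalently, −(3/T^{2/3})·Tr((A·Aᵀ)^{2/3})). -/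
/-!
Let `C` be the pseudoinverse of `B`. Then `X := C A` satisfies `B X = A` and `X Xᵀ = T B`, because
`B³ = AAᵀ/T` forces the range of `A` into that of `B`. The pair `(X, B)` is a saddle point of `f`:
completing the square in `M` shows that `f(Y, ·)` is maximised at `YYᵀ/T`, which is `B` for
`Y = X`, and completing the square in `Y` (using `A = B X` and `B ⪰ 0`) shows that `f(·, B)` is
minimised at `X`. Hence both iterated extrema equal `f(X, B) = -3 Tr(B²)`.
-/

open Matrix

theorem iInf_iSup_eq_and_iSup_iInf_eq_of_saddle {α ι ι' : Type*} [CompleteLattice α]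
    {f : ι → ι' → α} {i₀ : ι} {j₀ : ι'} (hmax : ∀ j, f i₀ j ≤ f i₀ j₀)
    (hmin : ∀ i, f i₀ j₀ ≤ f i j₀) :
    (⨅ i, ⨆ j, f i j) = f i₀ j₀ ∧ (⨆ j, ⨅ i, f i j) = f i₀ j₀ := by
  have hlow : f i₀ j₀ ≤ ⨆ j, ⨅ i, f i j := le_iSup_of_le j₀ (le_iInf hmin)
  have hup : (⨅ i, ⨆ j, f i j) ≤ f i₀ j₀ := iInf_le_of_le i₀ (iSup_le hmax)
  have hminmax : (⨆ j, ⨅ i, f i j) ≤ ⨅ i, ⨆ j, f i j := iSup_iInf_le_iInf_iSup _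
  exact ⟨le_antisymm hup (hlow.trans hminmax), le_antisymm (hminmax.trans hup) hlow⟩

namespace Matrix

variable {m n : Type*} [Fintype m] [Fintype n]

theorem trace_transpose_mul_self_nonneg (D : Matrix m n ℝ) : 0 ≤ (Dᵀ * D).trace := by
  simpa using (posSemidef_conjTranspose_mul_self D).trace_nonneg

theorem trace_transpose_mul_mul_self (Y : Matrix m n ℝ) (M : Matrix m m ℝ) :
    (Yᵀ * M * Y).trace = (Mᵀ * (Y * Yᵀ)).trace := by
  rw [trace_mul_cycle, ← trace_transpose (Mᵀ * _), transpose_mul, transpose_transpose,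
    transpose_mul, transpose_transpose]

theorem PosSemidef.trace_transpose_mul_mul_nonneg {M : Matrix m m ℝ} (hM : M.PosSemidef)
    (D : Matrix m n ℝ) : 0 ≤ (Dᵀ * M * D).trace := by
  simpa using (hM.conjTranspose_mul_mul_same D).trace_nonneg

theorem IsHermitian.exists_mul_eq_of_mul_transpose_eq_smul_pow_three [DecidableEq m]
    {A : Matrix m n ℝ} {B : Matrix m m ℝ} (hB : B.IsHermitian) {c : ℝ}
    (hA : A * Aᵀ = c • B ^ 3) : ∃ X : Matrix m n ℝ, B * X = A ∧ X * Xᵀ = c • B := by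
  have hmul (f g : ℝ → ℝ) : cfc f B * cfc g B = cfc (fun x => f x * g x) B :=
    (cfc_mul f g B (B.finite_real_spectrum.continuousOn f)
      (B.finite_real_spectrum.continuousOn g)).symm
  have hBsa : IsSelfAdjoint B := hB
  -- the pseudoinverse of `B`: since `0⁻¹ = 0`, both `x * x⁻¹ * x ^ 3 = x ^ 3` and
  -- `x⁻¹ * x ^ 3 * x⁻¹ = x` hold for every real `x`
  set C := cfc (·⁻¹ : ℝ → ℝ) B
  have hCt : Cᵀ = C := by
    have : IsSelfAdjoint C := cfc_predicate _ B
    simpa [IsSelfAdjoint, star_eq_conjTranspose] using this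
  have hBCB : B * C * B ^ 3 = B ^ 3 := by
    nth_rw 1 [← cfc_id' ℝ B]
    rw [← cfc_pow_id (R := ℝ) B 3, hmul, hmul]
    refine cfc_congr fun x _ => ?_
    rcases eq_or_ne x 0 with rfl | hx <;> field_simp
  have hCBC : C * B ^ 3 * C = B := by
    rw [← cfc_pow_id (R := ℝ) B 3, hmul, hmul]
    refine (cfc_congr fun x _ => ?_).trans (cfc_id' ℝ B)
    rcases eq_or_ne x 0 with rfl | hx <;> field_simp
  refine ⟨C * A, ?_, ?_⟩
  · have hD : (A - B * (C * A)) * (A - B * (C * A))ᵀ = 0 := by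
      have : A - B * (C * A) = (1 - B * C) * A := by
        rw [Matrix.sub_mul, Matrix.one_mul, Matrix.mul_assoc]
      rw [this, transpose_mul, Matrix.mul_assoc, ← Matrix.mul_assoc A, hA, Matrix.smul_mul,
        Matrix.mul_smul, ← Matrix.mul_assoc, Matrix.sub_mul, Matrix.one_mul, hBCB, sub_self,
        Matrix.zero_mul, smul_zero]
    refine (sub_eq_zero.mp (trace_mul_conjTranspose_self_eq_zero_iff.mp ?_)).symm
    rw [conjTranspose_eq_transpose_of_trivial, hD, trace_zero]
  · rw [transpose_mul, hCt, ← Matrix.mul_assoc, Matrix.mul_assoc C, hA, Matrix.mul_smul,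
      Matrix.smul_mul, hCBC]

end Matrix

variable {m n : Type*} [Fintype m] [Fintype n]

/-- The objective `f(Y, M)`, with `T` generalised to a real parameter `t`. -/
noncomputable def pspObjective (t : ℝ) (A Y : Matrix m n ℝ) (M : Matrix m m ℝ) : ℝ :=
  ((-(4 / t)) • (Aᵀ * Y) + (2 / t) • (Yᵀ * M * Y)).trace - (Mᵀ * M).trace

theorem pspObjective_eq (t : ℝ) (A Y : Matrix m n ℝ) (M : Matrix m m ℝ) :
    pspObjective t A Y M =
      -(4 / t) * (Aᵀ * Y).trace + 2 / t * (Yᵀ * M * Y).trace - (Mᵀ * M).trace := by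
  simp [pspObjective, trace_add, trace_smul]

theorem pspObjective_add_trace_sq_eq (t : ℝ) (A Y : Matrix m n ℝ) (M : Matrix m m ℝ) :
    pspObjective t A Y M + ((M - t⁻¹ • (Y * Yᵀ))ᵀ * (M - t⁻¹ • (Y * Yᵀ))).trace =
      pspObjective t A Y (t⁻¹ • (Y * Yᵀ)) := by
  simp only [pspObjective_eq, trace_transpose_mul_mul_self, transpose_sub, Matrix.sub_mul,
    Matrix.mul_sub, trace_sub, transpose_smul, Matrix.smul_mul, Matrix.mul_smul, trace_smul,
    smul_eq_mul]
  rw [← trace_transpose ((Y * Yᵀ)ᵀ * M), transpose_mul, transpose_transpose]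
  ring

theorem pspObjective_le_gram (t : ℝ) (A Y : Matrix m n ℝ) (M : Matrix m m ℝ) :
    pspObjective t A Y M ≤ pspObjective t A Y (t⁻¹ • (Y * Yᵀ)) := by
  rw [← pspObjective_add_trace_sq_eq]
  exact le_add_of_nonneg_right (trace_transpose_mul_self_nonneg _)

theorem pspObjective_mul_eq_add_trace_sq {M : Matrix m m ℝ} (hM : M.IsHermitian) (t : ℝ)
    (X Y : Matrix m n ℝ) :
    pspObjective t (M * X) Y M =
      pspObjective t (M * X) X M + 2 / t * ((Y - X)ᵀ * M * (Y - X)).trace := by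
  have hMt : Mᵀ = M := by simpa using hM.eq
  simp only [pspObjective_eq, transpose_sub, Matrix.sub_mul, Matrix.mul_sub, trace_sub,
    transpose_mul, hMt]
  rw [← trace_transpose (Yᵀ * M * X)]
  simp only [transpose_mul, transpose_transpose, hMt, Matrix.mul_assoc]
  ring

theorem pspObjective_mul_le {M : Matrix m m ℝ} (hM : M.PosSemidef) {t : ℝ}
    (ht : 0 ≤ t) (X Y : Matrix m n ℝ) :
    pspObjective t (M * X) X M ≤ pspObjective t (M * X) Y M := by
  rw [pspObjective_mul_eq_add_trace_sq hM.isHermitian t X Y]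
  exact le_add_of_nonneg_right
    (mul_nonneg (by positivity) (hM.trace_transpose_mul_mul_nonneg (Y - X)))

theorem pspObjective_mul_eq_neg_three_mul_trace_sq [DecidableEq m] {B : Matrix m m ℝ}
    (hB : B.IsHermitian) {t : ℝ} (ht : t ≠ 0) {X : Matrix m n ℝ} (hX : X * Xᵀ = t • B) :
    pspObjective t (B * X) X B = -3 * (B ^ 2).trace := by
  have hBt : Bᵀ = B := by simpa using hB.eq
  rw [pspObjective_eq, transpose_mul, hBt, trace_transpose_mul_mul_self, hX,
    hBt, Matrix.mul_smul, trace_smul, smul_eq_mul, sq]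
  field_simp
  ring

theorem psp_strong_minmax_general (k T : ℕ) (hT : 0 < T)
    (A : Matrix (Fin k) (Fin T) ℝ)
    (B : Matrix (Fin k) (Fin k) ℝ) (hB : B.PosSemidef)
    (hB3 : B ^ 3 = (1 / (T : ℝ)) • (A * Aᵀ)) :
    (⨅ Y : Matrix (Fin k) (Fin T) ℝ, ⨆ M : Matrix (Fin k) (Fin k) ℝ,
        ((((-(4 / (T : ℝ))) • (Aᵀ * Y) + (2 / (T : ℝ)) • (Yᵀ * M * Y)).trace
          - (Mᵀ * M).trace : ℝ) : EReal))
      = ((-3 * (B ^ 2).trace : ℝ) : EReal) ∧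
    (⨆ M : Matrix (Fin k) (Fin k) ℝ, ⨅ Y : Matrix (Fin k) (Fin T) ℝ,
        ((((-(4 / (T : ℝ))) • (Aᵀ * Y) + (2 / (T : ℝ)) • (Yᵀ * M * Y)).trace
          - (Mᵀ * M).trace : ℝ) : EReal))
      = ((-3 * (B ^ 2).trace : ℝ) : EReal) := by
  have hT : (T : ℝ) ≠ 0 := Nat.cast_ne_zero.mpr hT.ne'
  have hAA : A * Aᵀ = (T : ℝ) • B ^ 3 := by
    rw [hB3, smul_smul, mul_one_div_cancel hT, one_smul]
  obtain ⟨X, rfl, hX⟩ := hB.isHermitian.exists_mul_eq_of_mul_transpose_eq_smul_pow_three hAA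
  have hgram : (T : ℝ)⁻¹ • (X * Xᵀ) = B := by
    rw [hX, smul_smul, inv_mul_cancel₀ hT, one_smul]
  rw [← pspObjective_mul_eq_neg_three_mul_trace_sq hB.isHermitian hT hX]
  refine iInf_iSup_eq_and_iSup_iInf_eq_of_saddle
    (f := fun Y M => (pspObjective T (B * X) Y M : EReal)) (i₀ := X) (j₀ := B)
    (fun M => ?_) (fun Y => ?_)
  · exact EReal.coe_le_coe_iff.mpr (hgram ▸ pspObjective_le_gram _ _ _ _)
  · exact EReal.coe_le_coe_iff.mpr (pspObjective_mul_le hB (Nat.cast_nonneg T) X Y)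

/-- Strong min-max property for the reduced PSP objective
`f(Y, M) = Tr(−(4/T)AᵀY + (2/T)YᵀMY) − Tr(MᵀM)`:
both `inf_Y sup_M` and `sup_M inf_Y` equal `−3 Tr(B²)` where `B` is a
positive semidefinite matrix with `B³ = (1/T)AAᵀ`. -/
theorem psp_strong_minmax (k T : ℕ) (hk : 0 < k) (hT : 0 < T)
    (A : Matrix (Fin k) (Fin T) ℝ)
    (B : Matrix (Fin k) (Fin k) ℝ) (hB : B.PosSemidef)
    (hB3 : B ^ 3 = (1 / (T : ℝ)) • (A * Aᵀ)) :
    (⨅ Y : Matrix (Fin k) (Fin T) ℝ, ⨆ M : Matrix (Fin k) (Fin k) ℝ,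
        ((((-(4 / (T : ℝ))) • (Aᵀ * Y) + (2 / (T : ℝ)) • (Yᵀ * M * Y)).trace
          - (Mᵀ * M).trace : ℝ) : EReal))
      = ((-3 * (B ^ 2).trace : ℝ) : EReal) ∧
    (⨆ M : Matrix (Fin k) (Fin k) ℝ, ⨅ Y : Matrix (Fin k) (Fin T) ℝ,
        ((((-(4 / (T : ℝ))) • (Aᵀ * Y) + (2 / (T : ℝ)) • (Yᵀ * M * Y)).trace
          - (Mᵀ * M).trace : ℝ) : EReal))
      = ((-3 * (B ^ 2).trace : ℝ) : EReal) :=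
  psp_strong_minmax_general k T hT A B hB hB3
end

section
/- Fix positive integers k and T, A ∈ ℝ^{k×T}, and Y* ∈ ℝ^{k×T}, M* ∈ ℝ^{k×k} satisfying the stationarity equations M* = (1/T)·Y*·Y*ᵀ and M*·Y* = A. Then: (i) M* is symmetric positive semidefinite; (ii) (M*)³ = (1/T)·A·Aᵀ; and (iii) f(Y*, M*) = −3·Tr((M*)²), where f(Y, M) := Tr(−(4/T)·Aᵀ·Y + (2/T)·Yᵀ·M·Y) − Tr(Mᵀ·M). -/
/-!
At the stationary point `Y Yᵀ = T M` and `M` is symmetric (indeed PSD, as a Gram matrix), so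
every quantity collapses onto powers of `M`: `A Aᵀ = M (Y Yᵀ) M = T M³`, and
`Tr(Aᵀ Y) = Tr(Yᵀ M Y) = Tr(M Y Yᵀ) = T Tr(M²)`. The objective is then
`(-4 + 2 - 1) Tr(M²)`.
-/

open Matrix

section Stationary

variable {m n R : Type*} [Fintype m] [Fintype n] [DecidableEq m] [CommRing R]
  {t : R} {A Y : Matrix m n R} {M : Matrix m m R}

theorem mul_transpose_eq_smul_pow_three_of_stationary (hYY : Y * Yᵀ = t • M) (hsym : Mᵀ = M)
    (hMY : M * Y = A) : A * Aᵀ = t • M ^ 3 := by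
  rw [← hMY, transpose_mul, hsym, Matrix.mul_assoc, ← Matrix.mul_assoc Y, hYY,
    smul_mul_assoc, mul_smul_comm, pow_succ, pow_two, Matrix.mul_assoc]

theorem trace_transpose_mul_mul_eq_of_stationary (hYY : Y * Yᵀ = t • M) :
    (Yᵀ * M * Y).trace = t * (M ^ 2).trace := by
  rw [Matrix.mul_assoc, trace_mul_comm, Matrix.mul_assoc, hYY, mul_smul_comm, trace_smul, sq,
    smul_eq_mul]

theorem trace_transpose_mul_eq_of_stationary (hYY : Y * Yᵀ = t • M) (hsym : Mᵀ = M)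
    (hMY : M * Y = A) : (Aᵀ * Y).trace = t * (M ^ 2).trace := by
  rw [← hMY, transpose_mul, hsym, Matrix.mul_assoc,
    ← trace_transpose_mul_mul_eq_of_stationary hYY, Matrix.mul_assoc]

end Stationary

theorem psp_saddle_value_general (k T : ℕ) (hT : 0 < T)
    (A Ystar : Matrix (Fin k) (Fin T) ℝ) (Mstar : Matrix (Fin k) (Fin k) ℝ)
    (hM : Mstar = (1 / (T : ℝ)) • (Ystar * Ystarᵀ))
    (hMY : Mstar * Ystar = A) :
    Mstar.PosSemidef ∧
    Mstar ^ 3 = (1 / (T : ℝ)) • (A * Aᵀ) ∧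
    (((-(4 / (T : ℝ))) • (Aᵀ * Ystar)
        + (2 / (T : ℝ)) • (Ystarᵀ * Mstar * Ystar)).trace
      - (Mstarᵀ * Mstar).trace) = -3 * (Mstar ^ 2).trace := by
  have hT0 : (T : ℝ) ≠ 0 := Nat.cast_ne_zero.mpr hT.ne'
  have hpsd : Mstar.PosSemidef :=
    hM ▸ (posSemidef_self_mul_conjTranspose Ystar).smul (by positivity)
  have hsym : Mstarᵀ = Mstar := hpsd.1
  have hYY : Ystar * Ystarᵀ = (T : ℝ) • Mstar := by
    rw [hM, smul_smul, mul_one_div_cancel hT0, one_smul]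
  refine ⟨hpsd, ?_, ?_⟩
  · rw [mul_transpose_eq_smul_pow_three_of_stationary hYY hsym hMY, smul_smul,
      one_div_mul_cancel hT0, one_smul]
  · rw [trace_add, trace_smul, trace_smul, smul_eq_mul, smul_eq_mul,
      trace_transpose_mul_eq_of_stationary hYY hsym hMY,
      trace_transpose_mul_mul_eq_of_stationary hYY, hsym, ← sq]
    field_simp
    ring

/-- If `M* = (1/T) Y* Y*ᵀ` and `M* Y* = A`, then `M*` is symmetric positive
semidefinite, `(M*)³ = (1/T) A Aᵀ`, and the reduced PSP objective
`f(Y, M) = Tr(−(4/T)AᵀY + (2/T)YᵀMY) − Tr(MᵀM)` satisfies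
`f(Y*, M*) = −3 Tr((M*)²)`. -/
theorem psp_saddle_value (k T : ℕ) (hk : 0 < k) (hT : 0 < T)
    (A Ystar : Matrix (Fin k) (Fin T) ℝ) (Mstar : Matrix (Fin k) (Fin k) ℝ)
    (hM : Mstar = (1 / (T : ℝ)) • (Ystar * Ystarᵀ))
    (hMY : Mstar * Ystar = A) :
    Mstar.PosSemidef ∧
    Mstar ^ 3 = (1 / (T : ℝ)) • (A * Aᵀ) ∧
    (((-(4 / (T : ℝ))) • (Aᵀ * Ystar)
        + (2 / (T : ℝ)) • (Ystarᵀ * Mstar * Ystar)).trace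
      - (Mstarᵀ * Mstar).trace) = -3 * (Mstar ^ 2).trace :=
  psp_saddle_value_general k T hT A Ystar Mstar hM hMY
end

section
/- Let C ∈ ℝ^{n×n}, let M ∈ ℝ^{k×k} be invertible, let W ∈ ℝ^{k×n}, and set F := M⁻¹·W. Suppose the PSP fixed-point equations hold: W = F·C and M = F·C·Fᵀ. Then the neural filters are orthonormal: F·Fᵀ = I_k (the k×k identity matrix). -/
open Matrix

theorem Matrix.mul_eq_one_of_eq_inv_mul_of_eq_mul_mul {m n R : Type*} [Fintype m] [DecidableEq m]
    [Fintype n] [CommRing R] {C : Matrix n n R} {M : Matrix m m R} {W F : Matrix m n R}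
    {G : Matrix n m R} (hM : IsUnit M) (hF : F = M⁻¹ * W) (hW : W = F * C)
    (hMfp : M = F * C * G) : F * G = 1 :=
  calc F * G = M⁻¹ * (F * C) * G := by rw [← hW, ← hF]
    _ = M⁻¹ * (F * C * G) := by simp only [Matrix.mul_assoc]
    _ = 1 := by rw [← hMfp, nonsing_inv_mul M ((isUnit_iff_isUnit_det M).mp hM)]

/-- At a fixed point of the offline PSP dynamics (`W = FC`, `M = FCFᵀ` with
`F = M⁻¹W` and `M` invertible), the neural filters are orthonormal:
`FFᵀ = I`. -/
theorem psp_fixed_point_filters_orthonormal {n k : ℕ}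
    (C : Matrix (Fin n) (Fin n) ℝ) (M : Matrix (Fin k) (Fin k) ℝ)
    (W F : Matrix (Fin k) (Fin n) ℝ)
    (hM : IsUnit M) (hF : F = M⁻¹ * W)
    (hW : W = F * C) (hMfp : M = F * C * Fᵀ) :
    F * Fᵀ = 1 :=
  mul_eq_one_of_eq_inv_mul_of_eq_mul_mul hM hF hW hMfp
end

section
/- Let C ∈ ℝ^{n×n}, let F ∈ ℝ^{k×n} satisfy F·Fᵀ = I_k and (Fᵀ·F)·C = C·(Fᵀ·F), and set M := F·C·Fᵀ. Suppose v ∈ ℝ^k is a nonzero vector with M·v = λ·v for some real λ. Then Fᵀ·v is nonzero, C·(Fᵀ·v) = λ·(Fᵀ·v), and (Fᵀ·F)·(Fᵀ·v) = Fᵀ·v. In particular, every eigenvalue of M is an eigenvalue of C whose eigenvector lies in the row space of F. -/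
open Matrix

/-! If `F Fᵀ = 1` then `Fᵀ` is injective and `Fᵀ F` fixes its range, so
`C Fᵀ v = C (Fᵀ F) Fᵀ v = Fᵀ (F C Fᵀ) v = λ Fᵀ v` once `C` commutes with `Fᵀ F`. -/

namespace Matrix

variable {R m n : Type*} [CommSemiring R] [Fintype m] [Fintype n] [DecidableEq m]
  {A : Matrix m n R} {B : Matrix n m R}

theorem mulVec_mulVec_of_mul_eq_one (h : A * B = 1) (v : m → R) : A *ᵥ (B *ᵥ v) = v := by
  rw [mulVec_mulVec, h, one_mulVec]

theorem mulVec_ne_zero_of_mul_eq_one (h : A * B = 1) {v : m → R} (hv : v ≠ 0) :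
    B *ᵥ v ≠ 0 := by
  intro h0
  apply hv
  rw [← mulVec_mulVec_of_mul_eq_one h v, h0, mulVec_zero]

theorem mul_mulVec_mulVec_of_mul_eq_one (h : A * B = 1) (v : m → R) :
    (B * A) *ᵥ (B *ᵥ v) = B *ᵥ v := by
  rw [← mulVec_mulVec, mulVec_mulVec_of_mul_eq_one h]

theorem mulVec_mulVec_eq_smul_of_commute (h : A * B = 1) {C : Matrix n n R}
    (hC : Commute (B * A) C) {v : m → R} {c : R} (hv : (A * C * B) *ᵥ v = c • v) :
    C *ᵥ (B *ᵥ v) = c • (B *ᵥ v) :=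
  calc C *ᵥ (B *ᵥ v) = C *ᵥ ((B * A) *ᵥ (B *ᵥ v)) := by
        rw [mul_mulVec_mulVec_of_mul_eq_one h]
    _ = B *ᵥ ((A * C * B) *ᵥ v) := by
        rw [mulVec_mulVec, mulVec_mulVec, ← hC.eq, mulVec_mulVec]
        simp only [Matrix.mul_assoc]
    _ = c • (B *ᵥ v) := by rw [hv, mulVec_smul]

end Matrix

/-- At a PSP fixed point with orthonormal filters (`FFᵀ = I`) whose Gram
matrix `FᵀF` commutes with `C`, every eigenpair `(λ, v)` of `M = FCFᵀ` yields
an eigenvector `Fᵀv ≠ 0` of `C` with the same eigenvalue `λ`, lying in the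
row space of `F` (i.e. fixed by `FᵀF`). -/
theorem psp_lateral_eigenvalues {n k : ℕ}
    (C : Matrix (Fin n) (Fin n) ℝ) (F : Matrix (Fin k) (Fin n) ℝ)
    (horth : F * Fᵀ = 1) (hcomm : (Fᵀ * F) * C = C * (Fᵀ * F))
    (M : Matrix (Fin k) (Fin k) ℝ) (hM : M = F * C * Fᵀ)
    (v : Fin k → ℝ) (hv : v ≠ 0) (lam : ℝ) (heig : M *ᵥ v = lam • v) :
    Fᵀ *ᵥ v ≠ 0 ∧
    C *ᵥ (Fᵀ *ᵥ v) = lam • (Fᵀ *ᵥ v) ∧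
    (Fᵀ * F) *ᵥ (Fᵀ *ᵥ v) = Fᵀ *ᵥ v := by
  subst hM
  exact ⟨mulVec_ne_zero_of_mul_eq_one horth hv,
    mulVec_mulVec_eq_smul_of_commute horth hcomm heig,
    mul_mulVec_mulVec_of_mul_eq_one horth v⟩
end

section
/- Let σ_i, σ_j be positive reals and τ > 0, and set γ := σ_i/σ_j + σ_j/σ_i. Define the 2×2 real matrix H with entries: H₁₁ = (1 − 1/(2τ))·(σ_j − σ_i)·(1/σ_i − 1/σ_j) − 1/τ; H₁₂ = (1/τ)·(σ_j + σ_i); H₂₁ = (1 − 1/(2τ))·[(σ_j/σ_i − σ_i/σ_j)·(τ − 1/2)·(1/σ_i − 1/σ_j) − (1/σ_i + 1/σ_j)]; H₂₂ = (1 − 1/(2τ))·(σ_j/σ_i + σ_i/σ_j + 2) − 4. Then Tr(H) = −4 + (2 − 1/τ)·γ − 1/τ and det(H) = 8 + (2/τ − 4)·γ. Moreover: Tr(H) < 0 if and only if τ < (1 + 1/γ)/(2 − 4/γ) (interpreted as always true when σ_i = σ_j, i.e. γ = 2), det(H) > 0 if and only if τ < 1/(2 − 4/γ) (always true when γ = 2),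 and det(H) > 0 implies Tr(H) < 0. -/
/-!
Writing `γ = σᵢ/σⱼ + σⱼ/σᵢ`, the block `H` depends on `σᵢ, σⱼ` only through `γ`, because
`(σⱼ - σᵢ)(1/σᵢ - 1/σⱼ) = γ - 2`. Its trace and determinant are then affine in `γ` and tied by
`Tr H = -det H / 2 - 1/τ`, so `det H > 0` forces `Tr H < 0`. Multiplying through by `τ` and `γ`
turns both sign conditions into upper bounds on `τ`; they become the stated thresholds once
`2 - 4/γ > 0`, i.e. `γ > 2`, which holds exactly when `σᵢ ≠ σⱼ`. At `σᵢ = σⱼ` one has `γ = 2` and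
`det H = 4/τ > 0`.
-/

open Matrix

/-- The linearization block `H^{ij}`. -/
noncomputable def pspBlock (σi σj τ : ℝ) : Matrix (Fin 2) (Fin 2) ℝ :=
  !![(1 - 1 / (2 * τ)) * (σj - σi) * (1 / σi - 1 / σj) - 1 / τ,
      (1 / τ) * (σj + σi);
     (1 - 1 / (2 * τ)) * ((σj / σi - σi / σj) * (τ - 1 / 2) * (1 / σi - 1 / σj)
        - (1 / σi + 1 / σj)),
      (1 - 1 / (2 * τ)) * (σj / σi + σi / σj + 2) - 4]

section Block

variable {σi σj : ℝ} (τ : ℝ)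

theorem trace_pspBlock (hσi : σi ≠ 0) (hσj : σj ≠ 0) :
    (pspBlock σi σj τ).trace = -4 + (2 - 1 / τ) * (σi / σj + σj / σi) - 1 / τ := by
  rw [pspBlock, trace_fin_two_of]
  field_simp
  ring

theorem det_pspBlock (hσi : σi ≠ 0) (hσj : σj ≠ 0) (hτ : τ ≠ 0) :
    (pspBlock σi σj τ).det = 8 + (2 / τ - 4) * (σi / σj + σj / σi) := by
  rw [pspBlock, det_fin_two_of]
  field_simp
  ring

end Block

theorem two_lt_div_add_div {a b : ℝ} (ha : 0 < a) (hb : 0 < b) (hab : a ≠ b) :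
    2 < a / b + b / a := by
  have hsq : 0 < (a - b) ^ 2 / (a * b) := by
    have := sub_ne_zero.mpr hab
    positivity
  have hsplit : a / b + b / a = 2 + (a - b) ^ 2 / (a * b) := by
    field_simp
    ring
  linarith

theorem psp_trace_eq_neg_half_det_sub (γ τ : ℝ) :
    -4 + (2 - 1 / τ) * γ - 1 / τ = -(8 + (2 / τ - 4) * γ) / 2 - 1 / τ := by
  ring

section Criteria

variable {γ τ : ℝ}

theorem psp_trace_neg_of_det_pos (hτ : 0 < τ) (hdet : 0 < 8 + (2 / τ - 4) * γ) :
    -4 + (2 - 1 / τ) * γ - 1 / τ < 0 := by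
  rw [psp_trace_eq_neg_half_det_sub]
  have := one_div_pos.mpr hτ
  linarith

theorem psp_trace_neg_iff (hτ : 0 < τ) (hγ : 0 < γ) :
    -4 + (2 - 1 / τ) * γ - 1 / τ < 0 ↔ τ * (2 - 4 / γ) < 1 + 1 / γ := by
  have hfactor : -4 + (2 - 1 / τ) * γ - 1 / τ
      = -(γ / τ * ((1 + 1 / γ) - τ * (2 - 4 / γ))) := by
    field_simp
    ring
  rw [hfactor, neg_lt_zero, mul_pos_iff_of_pos_left (by positivity), sub_pos]

theorem psp_det_pos_iff (hτ : 0 < τ) (hγ : 0 < γ) :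
    0 < 8 + (2 / τ - 4) * γ ↔ τ * (2 - 4 / γ) < 1 := by
  have hfactor : 8 + (2 / τ - 4) * γ = 2 * γ / τ * (1 - τ * (2 - 4 / γ)) := by
    field_simp
    ring
  rw [hfactor, mul_pos_iff_of_pos_left (by positivity), sub_pos]

theorem two_sub_four_div_pos (hγ : 2 < γ) : 0 < 2 - 4 / γ := by
  rw [sub_pos, div_lt_iff₀ (by linarith)]
  linarith

end Criteria

/-- Trace/determinant and linear-stability conditions for the 2×2 PSP
linearization block `H^{ij}`: with `γ = σᵢ/σⱼ + σⱼ/σᵢ`,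
`Tr H = −4 + (2 − 1/τ)γ − 1/τ`, `det H = 8 + (2/τ − 4)γ`;
`Tr H < 0 ↔ τ < (1 + 1/γ)/(2 − 4/γ)` and `det H > 0 ↔ τ < 1/(2 − 4/γ)`
(both conditions holding unconditionally when `σᵢ = σⱼ`, i.e. `γ = 2`), and
`det H > 0` implies `Tr H < 0`. -/
theorem psp_stability_block {σi σj τ : ℝ}
    (hσi : 0 < σi) (hσj : 0 < σj) (hτ : 0 < τ) :
    let γ : ℝ := σi / σj + σj / σi
    let H : Matrix (Fin 2) (Fin 2) ℝ :=
      !![(1 - 1 / (2 * τ)) * (σj - σi) * (1 / σi - 1 / σj) - 1 / τ,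
          (1 / τ) * (σj + σi);
         (1 - 1 / (2 * τ)) * ((σj / σi - σi / σj) * (τ - 1 / 2) * (1 / σi - 1 / σj)
            - (1 / σi + 1 / σj)),
          (1 - 1 / (2 * τ)) * (σj / σi + σi / σj + 2) - 4]
    H.trace = -4 + (2 - 1 / τ) * γ - 1 / τ ∧
    H.det = 8 + (2 / τ - 4) * γ ∧
    (σi = σj → H.trace < 0) ∧
    (σi ≠ σj → (H.trace < 0 ↔ τ < (1 + 1 / γ) / (2 - 4 / γ))) ∧
    (σi = σj → 0 < H.det) ∧
    (σi ≠ σj → (0 < H.det ↔ τ < 1 / (2 - 4 / γ))) ∧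
    (0 < H.det → H.trace < 0) := by
  intro γ H
  have htrace : H.trace = -4 + (2 - 1 / τ) * γ - 1 / τ := trace_pspBlock τ hσi.ne' hσj.ne'
  have hdet : H.det = 8 + (2 / τ - 4) * γ := det_pspBlock τ hσi.ne' hσj.ne' hτ.ne'
  have hdet_pos_of_eq : σi = σj → 0 < H.det := by
    rintro rfl
    rw [hdet, show γ = 2 by norm_num [γ, div_self hσi.ne']]
    ring_nf
    positivity
  have htrace_neg_of_det_pos : 0 < H.det → H.trace < 0 := by
    rw [htrace, hdet]
    exact psp_trace_neg_of_det_pos hτ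
  have hγ : σi ≠ σj → 2 < γ := two_lt_div_add_div hσi hσj
  refine ⟨htrace, hdet, fun h => htrace_neg_of_det_pos (hdet_pos_of_eq h), fun h => ?_,
    hdet_pos_of_eq, fun h => ?_, htrace_neg_of_det_pos⟩
  · rw [lt_div_iff₀ (two_sub_four_div_pos (hγ h)), htrace,
      psp_trace_neg_iff hτ (by linarith [hγ h])]
  · rw [lt_div_iff₀ (two_sub_four_div_pos (hγ h)), hdet,
      psp_det_pos_iff hτ (by linarith [hγ h])]
end

section
/- Let k ≤ T be positive integers and A ∈ ℝ^{k×T}. Then the minimum of −(2/T)·Tr(Aᵀ·Y) over all Y ∈ ℝ^{k×T} satisfying (1/T)·Y·Yᵀ = I_k equals −2·Tr(S), where S is the unique positive semidefinite square root of (1/T)·A·Aᵀ (equivalently, the minimum equals −(2/√T)·Tr((A·Aᵀ)^{1/2})); in particular the constrained infimum is attained. -/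
open Matrix

/-!
Rescaling `A = √T • B` and `Y = √T • U` turns the problem into maximising `Tr (Bᵀ U)` over
matrices `U` with orthonormal rows, where `B Bᵀ = S²`. Since `k ≤ T`, `B` has a polar
decomposition `B = S W` with `W Wᵀ = 1`: if `S = V D Vᵀ`, the rows of `Vᵀ B` are orthogonal with
norms the eigenvalues of `S`, and normalising them and completing to an orthonormal family gives
`Vᵀ W`. The choice `U = W` attains `Tr S`, and no `U` does better because
`0 ≤ Tr ((W - U)ᵀ S (W - U)) = 2 Tr S - 2 Tr (Bᵀ U)`.
-/

theorem exists_orthonormal_of_pairwise_inner_eq_zero {𝕜 ι E : Type*} [RCLike 𝕜] [Fintype ι]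
    [NormedAddCommGroup E] [InnerProductSpace 𝕜 E] [FiniteDimensional 𝕜 E] {f : ι → E}
    (hf : Pairwise fun i j ↦ inner 𝕜 (f i) (f j) = 0)
    (hcard : Fintype.card ι ≤ Module.finrank 𝕜 E) :
    ∃ u : ι → E, Orthonormal 𝕜 u ∧ ∀ i, f i = (‖f i‖ : 𝕜) • u i := by
  classical
  -- padding indices make the total count `finrank 𝕜 E`, so that the extension is a basis
  let v : ι ⊕ Fin (Module.finrank 𝕜 E - Fintype.card ι) → E :=
    Sum.elim (fun i ↦ (‖f i‖⁻¹ : 𝕜) • f i) 0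
  have hv : Orthonormal 𝕜 ({x | v x ≠ 0}.domRestrict v) := by
    refine ⟨?_, ?_⟩
    · rintro ⟨i | j, hx⟩
      · have hi : f i ≠ 0 := fun h ↦ hx (by simp [v, h])
        exact norm_smul_inv_norm hi
      · exact absurd rfl hx
    · rintro ⟨i | j, hx⟩ ⟨i' | j', hy⟩ hxy
      · have hii' : i ≠ i' := fun h ↦ hxy (by subst h; rfl)
        show inner 𝕜 ((‖f i‖⁻¹ : 𝕜) • f i) ((‖f i'‖⁻¹ : 𝕜) • f i') = 0
        simp [inner_smul_left, inner_smul_right, hf hii']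
      all_goals first | exact absurd rfl hx | exact absurd rfl hy
  obtain ⟨b, hb⟩ := hv.exists_orthonormalBasis_extension_of_card_eq (by simp; omega)
  refine ⟨b ∘ Sum.inl, b.orthonormal.comp _ Sum.inl_injective, fun i ↦ ?_⟩
  by_cases hi : f i = 0
  · simp [hi]
  · rw [Function.comp_apply, hb (Sum.inl i) (by simpa [v] using hi)]
    simp [v, smul_smul, hi]

theorem Matrix.inner_toLp_eq_mul_transpose_apply {m n : Type*} [Fintype n] (C : Matrix m n ℝ)
    (i j : m) : inner ℝ (WithLp.toLp 2 (C i)) (WithLp.toLp 2 (C j)) = (C * Cᵀ) i j := by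
  rw [EuclideanSpace.inner_toLp_toLp, mul_apply', star_trivial, dotProduct_comm]
  rfl

theorem Matrix.exists_eq_diagonal_mul_of_mul_transpose_eq_diagonal {m n : Type*} [Fintype m]
    [Fintype n] [DecidableEq m] (hmn : Fintype.card m ≤ Fintype.card n) {C : Matrix m n ℝ}
    {d : m → ℝ} (hd : ∀ i, 0 ≤ d i) (hC : C * Cᵀ = diagonal fun i ↦ d i ^ 2) :
    ∃ U : Matrix m n ℝ, U * Uᵀ = 1 ∧ C = diagonal d * U := by
  let f i : EuclideanSpace ℝ n := WithLp.toLp 2 (C i)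
  have hinner i j : inner ℝ (f i) (f j) = (C * Cᵀ) i j := inner_toLp_eq_mul_transpose_apply C i j
  have horth : Pairwise fun i j ↦ inner ℝ (f i) (f j) = 0 := fun i j hij ↦
    (hinner i j).trans (by rw [hC, diagonal_apply_ne _ hij])
  have hnorm i : ‖f i‖ = d i := by
    rw [← sq_eq_sq₀ (norm_nonneg _) (hd i), ← real_inner_self_eq_norm_sq, hinner, hC,
      diagonal_apply_eq]
  obtain ⟨u, hu, hfu⟩ := exists_orthonormal_of_pairwise_inner_eq_zero horth (by simpa using hmn)
  refine ⟨of fun i ↦ u i, ?_, ?_⟩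
  · ext i j
    rw [← inner_toLp_eq_mul_transpose_apply, one_apply, ← orthonormal_iff_ite.mp hu]
    rfl
  · ext i j
    rw [diagonal_mul, ← hnorm]
    exact congrFun (congrArg WithLp.ofLp (hfu i)) j

theorem Matrix.PosSemidef.exists_orthogonal_diagonalization {m : Type*} [Fintype m]
    [DecidableEq m] {S : Matrix m m ℝ} (hS : S.PosSemidef) :
    ∃ (V : Matrix m m ℝ) (d : m → ℝ), (∀ i, 0 ≤ d i) ∧ Vᵀ * V = 1 ∧ V * Vᵀ = 1 ∧
      S = V * diagonal d * Vᵀ := by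
  have hV := hS.1.eigenvectorUnitary.2
  refine ⟨hS.1.eigenvectorUnitary, hS.1.eigenvalues, hS.eigenvalues_nonneg, ?_, ?_, ?_⟩
  · simpa [star_eq_conjTranspose] using mem_unitaryGroup_iff'.mp hV
  · simpa [star_eq_conjTranspose] using mem_unitaryGroup_iff.mp hV
  · simpa [star_eq_conjTranspose] using hS.1.spectral_theorem

theorem Matrix.PosSemidef.exists_eq_mul_of_mul_transpose_eq_mul_self {m n : Type*} [Fintype m]
    [Fintype n] [DecidableEq m] (hmn : Fintype.card m ≤ Fintype.card n) {S : Matrix m m ℝ}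
    (hS : S.PosSemidef) {B : Matrix m n ℝ} (hB : B * Bᵀ = S * S) :
    ∃ W : Matrix m n ℝ, W * Wᵀ = 1 ∧ B = S * W := by
  obtain ⟨V, d, hd, hVtV, hVVt, hSV⟩ := hS.exists_orthogonal_diagonalization
  have hVSV : Vᵀ * S * V = diagonal d := by
    rw [hSV]; simp only [Matrix.mul_assoc]
    rw [hVtV, Matrix.mul_one, ← Matrix.mul_assoc, hVtV, Matrix.one_mul]
  have hC : (Vᵀ * B) * (Vᵀ * B)ᵀ = diagonal fun i ↦ d i ^ 2 := by
    calc (Vᵀ * B) * (Vᵀ * B)ᵀ = Vᵀ * (B * Bᵀ) * V := by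
          simp only [transpose_mul, transpose_transpose, Matrix.mul_assoc]
      _ = (Vᵀ * S * V) * (Vᵀ * S * V) := by
          rw [hB]; simp only [Matrix.mul_assoc]
          rw [← Matrix.mul_assoc V Vᵀ, hVVt, Matrix.one_mul]
      _ = _ := by rw [hVSV, diagonal_mul_diagonal]; simp only [sq]
  obtain ⟨U, hU, hBU⟩ := exists_eq_diagonal_mul_of_mul_transpose_eq_diagonal hmn hd hC
  refine ⟨V * U, ?_, ?_⟩
  · rw [transpose_mul, Matrix.mul_assoc, ← Matrix.mul_assoc U, hU, Matrix.one_mul, hVVt]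
  · calc B = V * (Vᵀ * B) := by rw [← Matrix.mul_assoc, hVVt, Matrix.one_mul]
      _ = S * (V * U) := by
        rw [hBU, hSV]; simp only [Matrix.mul_assoc]
        rw [← Matrix.mul_assoc Vᵀ V, hVtV, Matrix.one_mul]

theorem Matrix.trace_transpose_mul_mul_of_mul_transpose_eq_one {m n R : Type*} [Fintype m]
    [Fintype n] [CommSemiring R] [DecidableEq m] (S : Matrix m m R) {X : Matrix m n R}
    (hX : X * Xᵀ = 1) : (Xᵀ * S * X).trace = S.trace := by
  rw [trace_mul_comm, ← Matrix.mul_assoc, hX, Matrix.one_mul]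

theorem Matrix.PosSemidef.trace_transpose_mul_le {m n : Type*} [Fintype m] [Fintype n]
    [DecidableEq m] {S : Matrix m m ℝ} (hS : S.PosSemidef) {W U : Matrix m n ℝ}
    (hW : W * Wᵀ = 1) (hU : U * Uᵀ = 1) : ((S * W)ᵀ * U).trace ≤ S.trace := by
  have hSt : Sᵀ = S := by simpa using hS.1.eq
  have hcross : (Uᵀ * S * W).trace = (Wᵀ * S * U).trace := by
    rw [← trace_transpose]; simp [hSt, Matrix.mul_assoc]
  have hnonneg := (hS.conjTranspose_mul_mul_same (W - U)).trace_nonneg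
  simp only [conjTranspose_eq_transpose_of_trivial, transpose_sub, Matrix.sub_mul,
    Matrix.mul_sub, trace_sub] at hnonneg
  rw [trace_transpose_mul_mul_of_mul_transpose_eq_one S hW,
    trace_transpose_mul_mul_of_mul_transpose_eq_one S hU, hcross] at hnonneg
  rw [transpose_mul, hSt]
  linarith

theorem Matrix.PosSemidef.isGreatest_trace_transpose_mul {m n : Type*} [Fintype m]
    [Fintype n] [DecidableEq m] (hmn : Fintype.card m ≤ Fintype.card n) {S : Matrix m m ℝ}
    (hS : S.PosSemidef) {B : Matrix m n ℝ} (hB : B * Bᵀ = S * S) :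
    IsGreatest {r | ∃ U : Matrix m n ℝ, U * Uᵀ = 1 ∧ r = (Bᵀ * U).trace} S.trace := by
  obtain ⟨W, hW, rfl⟩ := hS.exists_eq_mul_of_mul_transpose_eq_mul_self hmn hB
  refine ⟨⟨W, hW, ?_⟩, ?_⟩
  · rw [transpose_mul, trace_transpose_mul_mul_of_mul_transpose_eq_one _ hW, trace_transpose]
  · rintro _ ⟨U, hU, rfl⟩
    exact hS.trace_transpose_mul_le hW hU

/-- The constrained minimum of `−(2/T) Tr(AᵀY)` over matrices `Y` satisfying
the whitening constraint `(1/T) Y Yᵀ = I` is attained and equals `−2 Tr S`,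
where `S` is the positive semidefinite square root of `(1/T) A Aᵀ`. -/
theorem psw_constrained_min (k T : ℕ) (hk : 0 < k) (hkT : k ≤ T)
    (A : Matrix (Fin k) (Fin T) ℝ)
    (S : Matrix (Fin k) (Fin k) ℝ) (hS : S.PosSemidef)
    (hS2 : S ^ 2 = (1 / (T : ℝ)) • (A * Aᵀ)) :
    IsLeast
      {r : ℝ | ∃ Y : Matrix (Fin k) (Fin T) ℝ,
        (1 / (T : ℝ)) • (Y * Yᵀ) = 1 ∧ r = -(2 / (T : ℝ)) * (Aᵀ * Y).trace}
      (-2 * S.trace) := by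
  have hT : (0 : ℝ) < T := by exact_mod_cast hk.trans_le hkT
  set c := √(T : ℝ)
  have hcc : c * c = T := Real.mul_self_sqrt hT.le
  have hc : c⁻¹ * c⁻¹ = 1 / T := by rw [← mul_inv, hcc, one_div]
  have hB : (c⁻¹ • A) * (c⁻¹ • A)ᵀ = S * S := by
    rw [← sq, hS2]
    simp only [transpose_smul, Matrix.smul_mul, Matrix.mul_smul, smul_smul, hc]
  obtain ⟨⟨U, hU, hSU⟩, hmax⟩ := hS.isGreatest_trace_transpose_mul (by simpa using hkT) hB
  refine ⟨⟨c • U, ?_, ?_⟩, ?_⟩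
  · simp only [transpose_smul, Matrix.smul_mul, Matrix.mul_smul, smul_smul, hcc, hU]
    rw [one_div_mul_cancel hT.ne', one_smul]
  · rw [hSU]
    simp only [transpose_smul, Matrix.smul_mul, Matrix.mul_smul, trace_smul, smul_eq_mul]
    rw [← hcc]
    field_simp
  · rintro _ ⟨Y, hY, rfl⟩
    have hle := hmax ⟨c⁻¹ • Y, by simpa only [transpose_smul, Matrix.smul_mul, Matrix.mul_smul,
      smul_smul, hc] using hY, rfl⟩
    simp only [transpose_smul, Matrix.smul_mul, Matrix.mul_smul, trace_smul, smul_eq_mul,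
      ← mul_assoc, hc] at hle
    linarith [show -(2 / (T : ℝ)) * (Aᵀ * Y).trace = -2 * (1 / T * (Aᵀ * Y).trace) by ring]
end

section
/- Let k ≤ T be positive integers and A ∈ ℝ^{k×T} have rank k (full row rank). Then the supremum over symmetric positive definite matrices M ∈ ℝ^{k×k} of −(1/T)·Tr(Aᵀ·M⁻¹·A) − Tr(M) equals −2·Tr(S), where S is the unique positive definite square root of (1/T)·A·Aᵀ; moreover the supremum is attained exactly at M = S. -/
/-!
Completing the square: when `S² = c AAᵀ` and `M` is positive definite,
`-c Tr(AᵀM⁻¹A) - Tr M = -2 Tr S - Tr((S - M)ᵀ M⁻¹ (S - M))`.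
The last trace is that of a positive semidefinite matrix, so it is nonnegative, and since `M⁻¹`
is positive definite it vanishes only when `S - M = 0`.
-/

open Matrix

variable {n m : Type*} [Fintype n] [Fintype m]

lemma Matrix.trace_transpose_sub_mul_inv_mul_sub {R : Type*} [CommRing R] [DecidableEq n]
    {S M : Matrix n n R} (hS : S.IsSymm) (hM : M.IsSymm) (hMdet : IsUnit M.det) :
    ((S - M)ᵀ * M⁻¹ * (S - M)).trace = (M⁻¹ * S ^ 2).trace - 2 * S.trace + M.trace := by
  have hexpand : (S - M)ᵀ * M⁻¹ * (S - M)
      = S * M⁻¹ * S - S * (M⁻¹ * M) - (M * M⁻¹) * S + (M * M⁻¹) * M := by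
    rw [transpose_sub, hS.eq, hM.eq]
    noncomm_ring
  have hcycle : (S * M⁻¹ * S).trace = (M⁻¹ * S ^ 2).trace := by
    rw [trace_mul_cycle, sq, trace_mul_comm]
  rw [hexpand, nonsing_inv_mul M hMdet, mul_nonsing_inv M hMdet]
  simp only [trace_add, trace_sub, hcycle, one_mul, mul_one]
  ring

lemma Matrix.PosDef.eq_zero_of_conjTranspose_mul_mul_same_eq_zero {R : Type*} [CommRing R]
    [PartialOrder R] [StarRing R] {P : Matrix n n R} (hP : P.PosDef) {D : Matrix n m R}
    (h : Dᴴ * P * D = 0) : D = 0 := by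
  classical
  refine ext_of_mulVec_single fun j => ?_
  rw [zero_mulVec]
  by_contra hne
  have hpos := hP.dotProduct_mulVec_pos hne
  simp only [star_mulVec, dotProduct_mulVec, vecMul_vecMul] at hpos
  simp [h] at hpos

open scoped ComplexOrder in
lemma Matrix.PosDef.trace_conjTranspose_mul_mul_same_eq_zero_iff {𝕜 : Type*} [RCLike 𝕜]
    {P : Matrix n n 𝕜} (hP : P.PosDef) (D : Matrix n m 𝕜) :
    (Dᴴ * P * D).trace = 0 ↔ D = 0 := by
  rw [(hP.posSemidef.conjTranspose_mul_mul_same D).trace_eq_zero_iff]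
  exact ⟨hP.eq_zero_of_conjTranspose_mul_mul_same_eq_zero, by rintro rfl; simp⟩

lemma Matrix.neg_mul_trace_transpose_mul_inv_mul_sub_trace_eq [DecidableEq n] {c : ℝ}
    {A : Matrix n m ℝ} {S M : Matrix n n ℝ} (hS : S.IsSymm) (hM : M.PosDef)
    (hS2 : S ^ 2 = c • (A * Aᵀ)) :
    -c * (Aᵀ * M⁻¹ * A).trace - M.trace
      = -2 * S.trace - ((S - M)ᵀ * M⁻¹ * (S - M)).trace := by
  have hcycle : (Aᵀ * M⁻¹ * A).trace = (M⁻¹ * (A * Aᵀ)).trace := by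
    rw [trace_mul_cycle, trace_mul_comm]
  have hMsymm : M.IsSymm := isHermitian_iff_isSymm.mp hM.isHermitian
  rw [trace_transpose_sub_mul_inv_mul_sub hS hMsymm ((isUnit_iff_isUnit_det M).mp hM.isUnit),
    hS2, Matrix.mul_smul, trace_smul, hcycle, smul_eq_mul]
  ring

theorem psw_maxmin_posdef_general (k T : ℕ)
    (A : Matrix (Fin k) (Fin T) ℝ)
    (S : Matrix (Fin k) (Fin k) ℝ) (hS : S.PosDef)
    (hS2 : S ^ 2 = (1 / (T : ℝ)) • (A * Aᵀ)) :
    IsGreatest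
      {r : ℝ | ∃ M : Matrix (Fin k) (Fin k) ℝ, M.PosDef ∧
        r = -(1 / (T : ℝ)) * (Aᵀ * M⁻¹ * A).trace - M.trace}
      (-2 * S.trace) ∧
    (∀ M : Matrix (Fin k) (Fin k) ℝ, M.PosDef →
      -(1 / (T : ℝ)) * (Aᵀ * M⁻¹ * A).trace - M.trace = -2 * S.trace →
      M = S) := by
  have hSsymm : S.IsSymm := isHermitian_iff_isSymm.mp hS.isHermitian
  have hobj (M : Matrix (Fin k) (Fin k) ℝ) (hM : M.PosDef) :=
    neg_mul_trace_transpose_mul_inv_mul_sub_trace_eq hSsymm hM hS2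
  have hgap_nonneg (M : Matrix (Fin k) (Fin k) ℝ) (hM : M.PosDef) :
      0 ≤ ((S - M)ᵀ * M⁻¹ * (S - M)).trace :=
    (hM.inv.posSemidef.conjTranspose_mul_mul_same (S - M)).trace_nonneg
  refine ⟨⟨⟨S, hS, by rw [hobj S hS]; simp⟩, ?_⟩, fun M hM hmax => ?_⟩
  · rintro r ⟨M, hM, rfl⟩
    linarith [hobj M hM, hgap_nonneg M hM]
  · have hgap : ((S - M)ᵀ * M⁻¹ * (S - M)).trace = 0 := by linarith [hobj M hM]
    have hSM : S - M = 0 := (hM.inv.trace_conjTranspose_mul_mul_same_eq_zero_iff _).mp hgap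
    exact (sub_eq_zero.mp hSM).symm

/-- For full row rank `A`, the supremum over symmetric positive definite `M`
of `−(1/T) Tr(AᵀM⁻¹A) − Tr(M)` equals `−2 Tr S`, where `S` is the positive
definite square root of `(1/T) A Aᵀ`; the supremum is attained exactly at
`M = S`. -/
theorem psw_maxmin_posdef (k T : ℕ) (hk : 0 < k) (hkT : k ≤ T)
    (A : Matrix (Fin k) (Fin T) ℝ) (hA : A.rank = k)
    (S : Matrix (Fin k) (Fin k) ℝ) (hS : S.PosDef)
    (hS2 : S ^ 2 = (1 / (T : ℝ)) • (A * Aᵀ)) :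
    IsGreatest
      {r : ℝ | ∃ M : Matrix (Fin k) (Fin k) ℝ, M.PosDef ∧
        r = -(1 / (T : ℝ)) * (Aᵀ * M⁻¹ * A).trace - M.trace}
      (-2 * S.trace) ∧
    (∀ M : Matrix (Fin k) (Fin k) ℝ, M.PosDef →
      -(1 / (T : ℝ)) * (Aᵀ * M⁻¹ * A).trace - M.trace = -2 * S.trace →
      M = S) :=
  psw_maxmin_posdef_general k T A S hS hS2
end

section
/- Let k ≤ T and n be positive integers, W ∈ ℝ^{k×n}, X ∈ ℝ^{n×T}. Define g(Y, M) := −(2/T)·Tr(Xᵀ·Wᵀ·Y) + Tr(M·((1/T)·Y·Yᵀ − I_k)) for Y ∈ ℝ^{k×T} and M ∈ ℝ^{k×k}. Then, with suprema and infima taken in the extended reals, inf over Y of sup over M of g(Y, M) equals sup over M of inf over Y of g(Y, M), and both equal −2·Tr(S), where S is the unique positive semidefinite square root of (1/T)·W·X·Xᵀ·Wᵀ. -/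
/-!
Put `A = W X`. Since `A Aᵀ = (√T S)²` and `k ≤ T`, a polar decomposition gives `A = √T S V` with
`V Vᵀ = 1`, and then `(√T V, S)` is a saddle point of `g`. Indeed `Y₀ = √T V` is whitened, so
`g(Y₀, M) = -2 Tr S` for every `M`; and completing the square,
`g(Y, S) = (1/T) Tr(S (Y - Y₀)(Y - Y₀)ᵀ) - 2 Tr S ≥ -2 Tr S` for every `Y`.
-/

open Matrix

theorem iInf_iSup_eq_and_iSup_iInf_eq_of_saddle_s13 {α β γ : Type*} [CompleteLattice γ]
    {f : α → β → γ} {c : γ} (a : α) (b : β) (ha : ∀ y, f a y ≤ c) (hb : ∀ x, c ≤ f x b) :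
    (⨅ x, ⨆ y, f x y) = c ∧ (⨆ y, ⨅ x, f x y) = c := by
  have hinf_sup : (⨅ x, ⨆ y, f x y) ≤ c := (iInf_le _ a).trans (iSup_le ha)
  have hsup_inf : c ≤ ⨆ y, ⨅ x, f x y :=
    (le_iInf hb).trans (le_iSup (fun y => ⨅ x, f x y) b)
  have hminimax := iSup_iInf_le_iInf_iSup fun y x => f x y
  exact ⟨hinf_sup.antisymm (hsup_inf.trans hminimax),
    (hminimax.trans hinf_sup).antisymm hsup_inf⟩

theorem Orthonormal.exists_orthonormal_extension_of_card_le {E ι : Type*}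
    [NormedAddCommGroup E] [InnerProductSpace ℝ E] [FiniteDimensional ℝ E] [Fintype ι]
    (hcard : Fintype.card ι ≤ Module.finrank ℝ E) {v : ι → E} {s : Set ι}
    (hv : Orthonormal ℝ (s.domRestrict v)) :
    ∃ w : ι → E, Orthonormal ℝ w ∧ ∀ i ∈ s, w i = v i := by
  obtain ⟨e⟩ :=
    Function.Embedding.nonempty_of_card_le (hcard.trans_eq (Fintype.card_fin _).symm)
  have hv' : Orthonormal ℝ ((e '' s).domRestrict (Function.extend e v 0)) := by
    convert hv.comp _ (Equiv.Set.image e s e.injective).symm.injective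
    ext ⟨_, i, hi, rfl⟩
    simp [Equiv.Set.image_symm_apply e s e.injective i ⟨i, hi, rfl⟩,
      e.injective.extend_apply]
  obtain ⟨b, hb⟩ := hv'.exists_orthonormalBasis_extension_of_card_eq (Fintype.card_fin _).symm
  refine ⟨b ∘ e, b.orthonormal.comp e e.injective, fun i hi => ?_⟩
  simp [hb (e i) ⟨i, hi, rfl⟩, e.injective.extend_apply]

section

variable {m p : Type*} [Fintype m] [Fintype p] [DecidableEq m]

theorem Matrix.exists_mul_transpose_eq_one_of_mul_transpose_eq_diagonal
    (hcard : Fintype.card m ≤ Fintype.card p) {B : Matrix m p ℝ} {d : m → ℝ}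
    (hB : B * Bᵀ = diagonal (d * d)) :
    ∃ C : Matrix m p ℝ, C * Cᵀ = 1 ∧ B = diagonal d * C := by
  have hrows (i j : m) : B i ⬝ᵥ B j = if i = j then d i * d i else 0 := by
    simpa [diagonal_apply, mul_apply, dotProduct] using congrFun (congrFun hB i) j
  let b (i : m) : EuclideanSpace ℝ p := WithLp.toLp 2 (B i)
  have hv : Orthonormal ℝ ({i | d i ≠ 0}.domRestrict fun i => (d i)⁻¹ • b i) := by
    rw [orthonormal_iff_ite]
    rintro ⟨i, hi⟩ ⟨j, hj⟩
    simp only [Set.domRestrict_apply, real_inner_smul_left, real_inner_smul_right, b,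
      EuclideanSpace.inner_toLp_toLp, star_trivial, dotProduct_comm (B j), hrows,
      Subtype.mk.injEq]
    split_ifs with h
    · subst h; field_simp [show d i ≠ 0 from hi]
    · simp
  obtain ⟨w, hw, hws⟩ := hv.exists_orthonormal_extension_of_card_le (by simpa using hcard)
  refine ⟨Matrix.of fun i => WithLp.ofLp (w i), ?_, ?_⟩
  · ext i j
    rw [orthonormal_iff_ite] at hw
    simpa [mul_apply, one_apply, EuclideanSpace.inner_eq_star_dotProduct, dotProduct, mul_comm]
      using hw i j
  · ext i j
    by_cases hdi : d i = 0
    · have hBi : B i = 0 := dotProduct_self_eq_zero.mp (by simp [hrows, hdi])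
      simp [hdi, hBi]
    · simp [hws i hdi, b, hdi]

theorem Matrix.IsHermitian.exists_eq_mul_of_mul_transpose_eq_mul_self
    (hcard : Fintype.card m ≤ Fintype.card p) {S : Matrix m m ℝ} (hS : S.IsHermitian)
    {A : Matrix m p ℝ} (hA : A * Aᵀ = S * S) :
    ∃ V : Matrix m p ℝ, V * Vᵀ = 1 ∧ A = S * V := by
  set U : Matrix m m ℝ := (hS.eigenvectorUnitary : Matrix m m ℝ)
  set d := hS.eigenvalues
  have hstar : star U = Uᵀ := by
    rw [star_eq_conjTranspose, conjTranspose_eq_transpose_of_trivial]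
  have hUUt : U * Uᵀ = 1 := by
    rw [← hstar]; exact Unitary.mul_star_self_of_mem hS.eigenvectorUnitary.2
  have hUtU : Uᵀ * U = 1 := by
    rw [← hstar]; exact Unitary.star_mul_self_of_mem hS.eigenvectorUnitary.2
  have hS_eq : S = U * diagonal d * Uᵀ := by
    rw [← hstar]; simpa [Unitary.conjStarAlgAut_apply] using hS.spectral_theorem
  obtain ⟨C, hCC, hUA⟩ := exists_mul_transpose_eq_one_of_mul_transpose_eq_diagonal hcard
    (B := Uᵀ * A) (d := d) <| by
      calc Uᵀ * A * (Uᵀ * A)ᵀ = Uᵀ * (S * S) * U := by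
            rw [transpose_mul, transpose_transpose, ← hA]; simp only [Matrix.mul_assoc]
        _ = (Uᵀ * U) * diagonal d * (Uᵀ * U) * diagonal d * (Uᵀ * U) := by
            rw [hS_eq]; simp only [Matrix.mul_assoc]
        _ = diagonal (d * d) := by
            rw [hUtU, Matrix.mul_one, Matrix.mul_one, Matrix.one_mul, diagonal_mul_diagonal]; rfl
  refine ⟨U * C, ?_, ?_⟩
  · rw [transpose_mul, Matrix.mul_assoc, ← Matrix.mul_assoc C, hCC, Matrix.one_mul, hUUt]
  · calc A = U * (Uᵀ * A) := by rw [← Matrix.mul_assoc, hUUt, Matrix.one_mul]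
      _ = U * diagonal d * (Uᵀ * U) * C := by
            rw [hUA, hUtU, Matrix.mul_one, Matrix.mul_assoc]
      _ = S * (U * C) := by rw [hS_eq]; simp only [Matrix.mul_assoc]

noncomputable def pswCost (t : ℝ) (A Y : Matrix m p ℝ) (M : Matrix m m ℝ) : ℝ :=
  -(2 / t) * (Aᵀ * Y).trace + (M * ((1 / t) • (Y * Yᵀ) - 1)).trace

theorem pswCost_sqrt_smul_eq {t : ℝ} (ht : 0 < t) {S M : Matrix m m ℝ} {A V : Matrix m p ℝ}
    (hV : V * Vᵀ = 1) (hA : A = √t • (S * V)) :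
    pswCost t A (√t • V) M = -2 * S.trace := by
  have hsq : √t * √t = t := Real.mul_self_sqrt ht.le
  have hfeas : (1 / t) • (√t • V * (√t • V)ᵀ) = 1 := by
    rw [transpose_smul, Matrix.smul_mul, Matrix.mul_smul, smul_smul, smul_smul, mul_assoc, hsq,
      hV, one_div_mul_cancel ht.ne', one_smul]
  have htrace : (Aᵀ * (√t • V)).trace = t * S.trace := by
    rw [hA, transpose_smul, Matrix.smul_mul, Matrix.mul_smul, smul_smul, hsq, trace_smul,
      transpose_mul, trace_mul_comm, ← Matrix.mul_assoc, hV, Matrix.one_mul, trace_transpose,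
      smul_eq_mul]
  rw [pswCost, hfeas, sub_self, Matrix.mul_zero, trace_zero, htrace]
  field_simp
  ring

theorem pswCost_self_eq {t : ℝ} (ht : 0 < t) {S : Matrix m m ℝ} (hS : Sᵀ = S)
    {A V : Matrix m p ℝ} (hV : V * Vᵀ = 1) (hA : A = √t • (S * V)) (Y : Matrix m p ℝ) :
    pswCost t A Y S = 1 / t * (S * ((Y - √t • V) * (Y - √t • V)ᵀ)).trace - 2 * S.trace := by
  have hsq : √t * √t = t := Real.mul_self_sqrt ht.le
  have hAY : (Aᵀ * Y).trace = √t * (S * (Y * Vᵀ)).trace := by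
    rw [hA, transpose_smul, Matrix.smul_mul, trace_smul, transpose_mul, hS, smul_eq_mul,
      trace_mul_cycle, trace_mul_comm]
  have hVY : (S * (V * Yᵀ)).trace = (S * (Y * Vᵀ)).trace := by
    rw [← trace_transpose, transpose_mul, transpose_mul, transpose_transpose, hS, trace_mul_comm]
  have hsquare : (S * ((Y - √t • V) * (Y - √t • V)ᵀ)).trace =
      (S * (Y * Yᵀ)).trace - 2 * √t * (S * (Y * Vᵀ)).trace + t * S.trace := by
    simp only [transpose_sub, transpose_smul, Matrix.sub_mul, Matrix.mul_sub, Matrix.smul_mul,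
      Matrix.mul_smul, hV, trace_sub, trace_smul, hVY, Matrix.mul_one, smul_eq_mul]
    linear_combination S.trace * hsq
  rw [pswCost, hAY, hsquare, Matrix.mul_sub, Matrix.mul_one, trace_sub, Matrix.mul_smul,
    trace_smul, smul_eq_mul]
  field_simp
  ring

theorem neg_two_mul_trace_le_pswCost_self {t : ℝ} (ht : 0 < t) {S : Matrix m m ℝ}
    (hS : S.PosSemidef) {A V : Matrix m p ℝ} (hV : V * Vᵀ = 1) (hA : A = √t • (S * V))
    (Y : Matrix m p ℝ) : -2 * S.trace ≤ pswCost t A Y S := by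
  have hSt : Sᵀ = S := by simpa [conjTranspose_eq_transpose_of_trivial] using hS.isHermitian.eq
  set Z := Y - √t • V
  have hZ : 0 ≤ (S * (Z * Zᵀ)).trace := by
    rw [← Matrix.mul_assoc, trace_mul_comm, ← Matrix.mul_assoc]
    simpa [conjTranspose_eq_transpose_of_trivial]
      using (hS.conjTranspose_mul_mul_same Z).trace_nonneg
  rw [pswCost_self_eq ht hSt hV hA]
  have : 0 ≤ 1 / t * (S * (Z * Zᵀ)).trace := mul_nonneg (by positivity) hZ
  linarith

end

theorem psw_strong_minmax_general (n k T : ℕ) (hk : 0 < k) (hkT : k ≤ T)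
    (W : Matrix (Fin k) (Fin n) ℝ) (X : Matrix (Fin n) (Fin T) ℝ)
    (S : Matrix (Fin k) (Fin k) ℝ) (hS : S.PosSemidef)
    (hS2 : S ^ 2 = (1 / (T : ℝ)) • (W * X * Xᵀ * Wᵀ)) :
    let g : Matrix (Fin k) (Fin T) ℝ → Matrix (Fin k) (Fin k) ℝ → ℝ :=
      fun Y M =>
        -(2 / (T : ℝ)) * (Xᵀ * Wᵀ * Y).trace
          + (M * ((1 / (T : ℝ)) • (Y * Yᵀ) - 1)).trace
    (⨅ Y : Matrix (Fin k) (Fin T) ℝ, ⨆ M : Matrix (Fin k) (Fin k) ℝ,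
        ((g Y M : ℝ) : EReal)) = ((-2 * S.trace : ℝ) : EReal) ∧
    (⨆ M : Matrix (Fin k) (Fin k) ℝ, ⨅ Y : Matrix (Fin k) (Fin T) ℝ,
        ((g Y M : ℝ) : EReal)) = ((-2 * S.trace : ℝ) : EReal) := by
  intro g
  have hT : (0 : ℝ) < T := by exact_mod_cast hk.trans_le hkT
  have hg : g = pswCost T (W * X) := by
    funext Y M
    simp only [g, pswCost, transpose_mul]
  have hWX : W * X * (W * X)ᵀ = (√T • S) * (√T • S) := by
    rw [Matrix.smul_mul, Matrix.mul_smul, smul_smul, Real.mul_self_sqrt hT.le, ← sq, hS2,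
      smul_smul, mul_one_div_cancel hT.ne', one_smul, transpose_mul, ← Matrix.mul_assoc]
  obtain ⟨V, hV, hA⟩ := (hS.smul (Real.sqrt_nonneg T)).isHermitian
    |>.exists_eq_mul_of_mul_transpose_eq_mul_self (by simpa using hkT) hWX
  rw [Matrix.smul_mul] at hA
  rw [hg]
  exact iInf_iSup_eq_and_iSup_iInf_eq_of_saddle_s13 (√T • V) S
    (fun M => (congrArg _ (pswCost_sqrt_smul_eq hT hV hA)).le)
    (fun Y => EReal.coe_le_coe_iff.2 (neg_two_mul_trace_le_pswCost_self hT hS hV hA Y))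

/-- Strong min-max property for the PSW cost
`g(Y, M) = −(2/T) Tr(XᵀWᵀY) + Tr(M((1/T)YYᵀ − I))`:
`inf_Y sup_M g = sup_M inf_Y g = −2 Tr S` in the extended reals, where `S`
is the positive semidefinite square root of `(1/T) W X Xᵀ Wᵀ`. -/
theorem psw_strong_minmax (n k T : ℕ) (hk : 0 < k) (hkT : k ≤ T) (hn : 0 < n)
    (W : Matrix (Fin k) (Fin n) ℝ) (X : Matrix (Fin n) (Fin T) ℝ)
    (S : Matrix (Fin k) (Fin k) ℝ) (hS : S.PosSemidef)
    (hS2 : S ^ 2 = (1 / (T : ℝ)) • (W * X * Xᵀ * Wᵀ)) :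
    let g : Matrix (Fin k) (Fin T) ℝ → Matrix (Fin k) (Fin k) ℝ → ℝ :=
      fun Y M =>
        -(2 / (T : ℝ)) * (Xᵀ * Wᵀ * Y).trace
          + (M * ((1 / (T : ℝ)) • (Y * Yᵀ) - 1)).trace
    (⨅ Y : Matrix (Fin k) (Fin T) ℝ, ⨆ M : Matrix (Fin k) (Fin k) ℝ,
        ((g Y M : ℝ) : EReal)) = ((-2 * S.trace : ℝ) : EReal) ∧
    (⨆ M : Matrix (Fin k) (Fin k) ℝ, ⨅ Y : Matrix (Fin k) (Fin T) ℝ,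
        ((g Y M : ℝ) : EReal)) = ((-2 * S.trace : ℝ) : EReal) :=
  psw_strong_minmax_general n k T hk hkT W X S hS hS2
end

section
/- Let C ∈ ℝ^{n×n} be symmetric positive semidefinite with positive semidefinite square root C^{1/2}, let M ∈ ℝ^{k×k} be symmetric, and let F ∈ ℝ^{k×n} satisfy the PSW fixed-point equations M·F = F·C and F·C·Fᵀ = I_k. Set R := F·C^{1/2} (the normalized neural filters). Then R·Rᵀ = I_k and Rᵀ·R commutes with C: (Rᵀ·R)·C = C·(Rᵀ·R). -/
open Matrix

/-! Writing `S` for the symmetric square root of `C`, whiteness gives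
`R Rᵀ = F S S Fᵀ = F C Fᵀ = I`. Symmetry of `M` turns `M F = F C` into `Fᵀ F C = Fᵀ M F = C Fᵀ F`,
so `Fᵀ F` commutes with `C`; since `S` commutes with `C = S²`, so does `Rᵀ R = S (Fᵀ F) S`. -/

namespace Matrix

variable {m n R : Type*} [Fintype n] [CommSemiring R]

theorem mul_mul_transpose_eq_one_of_sq_eq {F : Matrix m n R} {S C : Matrix n n R}
    [DecidableEq m] [DecidableEq n] (hS : S.IsSymm) (hSC : S ^ 2 = C) (h : F * C * Fᵀ = 1) :
    (F * S) * (F * S)ᵀ = 1 := by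
  rw [transpose_mul, hS.eq, ← h, ← hSC, sq]
  simp only [Matrix.mul_assoc]

theorem commute_transpose_mul_self_of_mul_eq_mul [Fintype m] {M : Matrix m m R} {F : Matrix m n R}
    {C : Matrix n n R} (hM : M.IsSymm) (hC : C.IsSymm) (h : M * F = F * C) :
    Commute (Fᵀ * F) C :=
  calc Fᵀ * F * C = Fᵀ * (M * F) := by rw [Matrix.mul_assoc, h]
    _ = (M * F)ᵀ * F := by rw [transpose_mul, hM.eq, Matrix.mul_assoc]
    _ = C * (Fᵀ * F) := by rw [h, transpose_mul, hC.eq, Matrix.mul_assoc]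

end Matrix

theorem psw_fixed_point_normalized_filters_general {n k : ℕ}
    (C Csqrt : Matrix (Fin n) (Fin n) ℝ)
    (hCsqrt : Csqrt.PosSemidef) (hCsq : Csqrt ^ 2 = C)
    (M : Matrix (Fin k) (Fin k) ℝ) (hMsymm : Mᵀ = M)
    (F : Matrix (Fin k) (Fin n) ℝ)
    (hMF : M * F = F * C) (hwhite : F * C * Fᵀ = 1) :
    (F * Csqrt) * (F * Csqrt)ᵀ = 1 ∧
    ((F * Csqrt)ᵀ * (F * Csqrt)) * C = C * ((F * Csqrt)ᵀ * (F * Csqrt)) := by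
  have hS : Csqrt.IsSymm := isHermitian_iff_isSymm.mp hCsqrt.isHermitian
  have hC : C.IsSymm := hCsq ▸ hS.pow 2
  have hSC : Commute Csqrt C := hCsq ▸ Commute.self_pow Csqrt 2
  have hFC : Commute (Fᵀ * F) C := commute_transpose_mul_self_of_mul_eq_mul hMsymm hC hMF
  refine ⟨mul_mul_transpose_eq_one_of_sq_eq hS hCsq hwhite, ?_⟩
  have hRR : (F * Csqrt)ᵀ * (F * Csqrt) = Csqrt * (Fᵀ * F) * Csqrt := by
    rw [transpose_mul, hS.eq, Matrix.mul_assoc, Matrix.mul_assoc, Matrix.mul_assoc]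
  rw [hRR]
  exact ((hSC.mul_left hFC).mul_left hSC).eq

/-- At a PSW fixed point (`MF = FC`, `FCFᵀ = I`, `M` symmetric, `C` symmetric
positive semidefinite with positive semidefinite square root `Csqrt`), the
normalized neural filters `R = F Csqrt` satisfy `RRᵀ = I` and `RᵀR` commutes
with `C`. -/
theorem psw_fixed_point_normalized_filters {n k : ℕ}
    (C Csqrt : Matrix (Fin n) (Fin n) ℝ)
    (hC : C.PosSemidef) (hCsqrt : Csqrt.PosSemidef) (hCsq : Csqrt ^ 2 = C)
    (M : Matrix (Fin k) (Fin k) ℝ) (hMsymm : Mᵀ = M)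
    (F : Matrix (Fin k) (Fin n) ℝ)
    (hMF : M * F = F * C) (hwhite : F * C * Fᵀ = 1) :
    (F * Csqrt) * (F * Csqrt)ᵀ = 1 ∧
    ((F * Csqrt)ᵀ * (F * Csqrt)) * C = C * ((F * Csqrt)ᵀ * (F * Csqrt)) :=
  psw_fixed_point_normalized_filters_general C Csqrt hCsqrt hCsq M hMsymm F hMF hwhite
end

section
/- Fix positive integers n, k, T with k ≤ T, and matrices X ∈ ℝ^{n×T}, W ∈ ℝ^{k×n}. Define L(M, Y) := −(2/T)·Tr(Xᵀ·Wᵀ·Y) + Tr(Wᵀ·W) + Tr(M·((1/T)·Y·Yᵀ − I_k)) for M ∈ ℝ^{k×k}, Y ∈ ℝ^{k×T}. Then sup over M of inf over Y of L(M, Y) equals Tr(Wᵀ·W) − 2·Tr(S), where S is the unique positive semidefinite square root of (1/T)·W·X·Xᵀ·Wᵀ (equivalently, the value is Tr(−(2/T^{1/2})·(W·X·Xᵀ·Wᵀ)^{1/2} + W·Wᵀ)), with suprema and infima taken in the extended reals. -/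
/-!
For fixed `M` the objective is a quadratic function of `Y`, with `B = W X`:
`L(M, Y) = Tr(WᵀW) − Tr M + (Tr(M Y Yᵀ) − 2 Tr(Bᵀ Y)) / T`, and `B Bᵀ = T S²`.
If `M` has a negative direction `x`, then `L(M, τ x 𝟙ᵀ) → −∞`. Otherwise the choice
`Y = S⁺ B`, with `S⁺` the pseudoinverse of `S`, gives `L(M, Y) = c − Tr(M (1 − S S⁺))` with
`c = Tr(WᵀW) − 2 Tr S`, and `1 − S S⁺` is a projection, so `L(M, Y) ≤ c`. Conversely the
range of `B` lies in that of `S`, i.e. `S S⁺ B = B`, so completing the square at `M = S`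
gives `L(S, Y) = c + Tr(S (Y − S⁺B)(Y − S⁺B)ᵀ) / T ≥ c` for every `Y`.
-/

open Matrix
open scoped MatrixOrder

lemma exists_quadratic_lt {a : ℝ} (ha : a < 0) (b d : ℝ) : ∃ τ, a * τ ^ 2 + b * τ < d := by
  set τ := 1 + (|b| + |d| + 1) / -a
  have hτ : a * τ = a - (|b| + |d| + 1) := by
    have : a * ((|b| + |d| + 1) / -a) = -(|b| + |d| + 1) := by field_simp [ha.ne]
    rw [mul_add, mul_one, this]
    ring
  have h1 : 1 ≤ τ := le_add_of_nonneg_right (div_nonneg (by positivity) (by linarith))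
  exact ⟨τ, by nlinarith [le_abs_self b, neg_abs_le b, le_abs_self d, neg_abs_le d]⟩

namespace Matrix

variable {m ι : Type*} [Fintype m] [Fintype ι]

lemma trace_mul_nonneg_of_posSemidef {M Q : Matrix m m ℝ} (hM : ∀ x, 0 ≤ x ⬝ᵥ M *ᵥ x)
    (hQ : Q.PosSemidef) : 0 ≤ (M * Q).trace := by
  obtain ⟨r, v, rfl⟩ := posSemidef_iff_eq_sum_vecMulVec.mp hQ
  simp only [Matrix.mul_sum, trace_sum, mul_vecMulVec, trace_vecMulVec, star_trivial]
  exact Finset.sum_nonneg fun i _ => by rw [dotProduct_comm]; exact hM (v i)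

lemma exists_trace_quadratic_lt [Nonempty ι] {M : Matrix m m ℝ} {x : m → ℝ}
    (hx : x ⬝ᵥ M *ᵥ x < 0) (B : Matrix m ι ℝ) (d : ℝ) :
    ∃ Y : Matrix m ι ℝ, (M * (Y * Yᵀ)).trace - 2 * (Bᵀ * Y).trace < d := by
  set V : Matrix m ι ℝ := vecMulVec x 1
  have hVV : (M * (V * Vᵀ)).trace = Fintype.card ι * (x ⬝ᵥ M *ᵥ x) := by
    rw [transpose_vecMulVec, vecMulVec_mul_vecMulVec, mul_vecMulVec, trace_vecMulVec,
      dotProduct_smul, dotProduct_comm (M *ᵥ x)]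
    simp
  have ha : (M * (V * Vᵀ)).trace < 0 := by
    rw [hVV]
    exact mul_neg_of_pos_of_neg (by exact_mod_cast Fintype.card_pos) hx
  obtain ⟨τ, hτ⟩ := exists_quadratic_lt ha (-2 * (Bᵀ * V).trace) d
  refine ⟨τ • V, ?_⟩
  simp only [transpose_smul, Matrix.smul_mul, Matrix.mul_smul, trace_smul, smul_eq_mul]
  linarith

lemma trace_mul_sub_mul_transpose_sub {S : Matrix m m ℝ} (hS : Sᵀ = S) {B Z : Matrix m ι ℝ}
    (hSZ : S * Z = B) (Y : Matrix m ι ℝ) :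
    (S * ((Y - Z) * (Y - Z)ᵀ)).trace
      = (S * (Y * Yᵀ)).trace - 2 * (Bᵀ * Y).trace + (Bᵀ * Z).trace := by
  have hZ (Y : Matrix m ι ℝ) : (S * (Z * Yᵀ)).trace = (Bᵀ * Y).trace := by
    rw [← Matrix.mul_assoc, hSZ, ← trace_transpose, transpose_mul, transpose_transpose,
      trace_mul_comm]
  have hZ' : (S * (Y * Zᵀ)).trace = (Bᵀ * Y).trace := by
    rw [← trace_transpose, transpose_mul, transpose_mul, transpose_transpose, hS, trace_mul_comm,
      hZ]
  simp only [transpose_sub, Matrix.sub_mul, Matrix.mul_sub, trace_sub, hZ, hZ']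
  ring

variable [DecidableEq m]

/-- For self-adjoint `S` this is the Moore–Penrose pseudoinverse: since `(0 : ℝ)⁻¹ = 0`, it
inverts `S` on its range and vanishes on its kernel. -/
noncomputable def pinv (S : Matrix m m ℝ) : Matrix m m ℝ := cfc (·⁻¹ : ℝ → ℝ) S

section pinv

variable {S : Matrix m m ℝ}

lemma transpose_pinv (S : Matrix m m ℝ) : (pinv S)ᵀ = pinv S := by
  rw [← conjTranspose_eq_transpose_of_trivial]
  exact IsSelfAdjoint.cfc

lemma commute_pinv (hS : IsSelfAdjoint S) : Commute S (pinv S) := by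
  have h := cfc_commute_cfc (fun x : ℝ => x) (·⁻¹) S
  rwa [cfc_id' ℝ S] at h

lemma pinv_mul_mul_self (hS : IsSelfAdjoint S) : pinv S * (S * S) = S := by
  have h := cfc_mul (fun x : ℝ => x⁻¹) (fun x => x * x) S (finite_real_spectrum.continuousOn _)
  rw [cfc_mul (fun x : ℝ => x) (fun x => x) S, cfc_id' ℝ S] at h
  rw [pinv, ← h]
  conv_rhs => rw [← cfc_id' ℝ S]
  exact cfc_congr fun x _ => by rw [← mul_assoc, inv_mul_mul_self]

lemma mul_pinv_mul_self (hS : IsSelfAdjoint S) : S * pinv S * S = S := by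
  rw [(commute_pinv hS).eq, Matrix.mul_assoc, pinv_mul_mul_self hS]

lemma posSemidef_one_sub_mul_pinv (hS : IsSelfAdjoint S) : (1 - S * pinv S).PosSemidef := by
  rw [← nonneg_iff_posSemidef]
  have h := cfc_mul (fun x : ℝ => x) (fun x => x⁻¹) S (hg := finite_real_spectrum.continuousOn _)
  rw [cfc_id' ℝ S] at h
  rw [pinv, ← h, ← cfc_one ℝ S, ← cfc_sub _ _ S (hg := finite_real_spectrum.continuousOn _)]
  refine cfc_nonneg fun x _ => ?_
  by_cases hx : x = 0 <;> simp [hx]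

end pinv

section quadratic

variable {S : Matrix m m ℝ} {B : Matrix m ι ℝ} {t : ℝ}

lemma mul_pinv_mul_of_mul_transpose_eq (hS : IsSelfAdjoint S) (hB : B * Bᵀ = t • (S * S)) :
    S * (pinv S * B) = B := by
  have h : (1 - S * pinv S) * (B * Bᴴ) = 0 := by
    rw [conjTranspose_eq_transpose_of_trivial, hB, Matrix.mul_smul, ← Matrix.mul_assoc,
      Matrix.sub_mul, Matrix.one_mul, mul_pinv_mul_self hS, sub_self, Matrix.zero_mul, smul_zero]
  have := (mul_self_mul_conjTranspose_eq_zero B _).1 h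
  rwa [Matrix.sub_mul, Matrix.one_mul, sub_eq_zero, eq_comm, Matrix.mul_assoc] at this

lemma trace_transpose_mul_pinv_mul (hS : IsSelfAdjoint S) (hB : B * Bᵀ = t • (S * S)) :
    (Bᵀ * (pinv S * B)).trace = t * S.trace := by
  rw [trace_mul_comm, Matrix.mul_assoc, hB, Matrix.mul_smul, pinv_mul_mul_self hS, trace_smul,
    smul_eq_mul]

lemma pinv_mul_mul_transpose (hS : IsSelfAdjoint S) (hB : B * Bᵀ = t • (S * S)) :
    pinv S * B * (pinv S * B)ᵀ = t • (S * pinv S) := by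
  rw [transpose_mul, transpose_pinv, Matrix.mul_assoc, ← Matrix.mul_assoc B, hB, Matrix.smul_mul,
    Matrix.mul_smul, ← Matrix.mul_assoc, pinv_mul_mul_self hS]

lemma trace_quadratic_pinv_mul_le (ht : 0 ≤ t) (hS : IsSelfAdjoint S)
    (hB : B * Bᵀ = t • (S * S)) {M : Matrix m m ℝ} (hM : ∀ x, 0 ≤ x ⬝ᵥ M *ᵥ x) :
    (M * (pinv S * B * (pinv S * B)ᵀ)).trace - 2 * (Bᵀ * (pinv S * B)).trace
      ≤ t * (M.trace - 2 * S.trace) := by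
  have h := trace_mul_nonneg_of_posSemidef hM (posSemidef_one_sub_mul_pinv hS)
  rw [Matrix.mul_sub, Matrix.mul_one, trace_sub, sub_nonneg] at h
  rw [pinv_mul_mul_transpose hS hB, trace_transpose_mul_pinv_mul hS hB, Matrix.mul_smul,
    trace_smul, smul_eq_mul]
  nlinarith

lemma exists_trace_quadratic_le [Nonempty ι] (ht : 0 ≤ t) (hS : IsSelfAdjoint S)
    (hB : B * Bᵀ = t • (S * S)) (M : Matrix m m ℝ) :
    ∃ Y : Matrix m ι ℝ, (M * (Y * Yᵀ)).trace - 2 * (Bᵀ * Y).trace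
      ≤ t * (M.trace - 2 * S.trace) := by
  by_cases hM : ∀ x, 0 ≤ x ⬝ᵥ M *ᵥ x
  · exact ⟨_, trace_quadratic_pinv_mul_le ht hS hB hM⟩
  · simp only [not_forall, not_le] at hM
    obtain ⟨x, hx⟩ := hM
    obtain ⟨Y, hY⟩ := exists_trace_quadratic_lt hx B (t * (M.trace - 2 * S.trace))
    exact ⟨Y, hY.le⟩

lemma trace_quadratic_ge (hS : S.PosSemidef) (hB : B * Bᵀ = t • (S * S)) (Y : Matrix m ι ℝ) :
    -(t * S.trace) ≤ (S * (Y * Yᵀ)).trace - 2 * (Bᵀ * Y).trace := by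
  have hsq := trace_mul_sub_mul_transpose_sub ((conjTranspose_eq_transpose_of_trivial S).symm.trans hS.isHermitian)
    (mul_pinv_mul_of_mul_transpose_eq hS.isHermitian hB) Y
  rw [trace_transpose_mul_pinv_mul hS.isHermitian hB] at hsq
  have hEE := posSemidef_self_mul_conjTranspose (Y - pinv S * B)
  rw [conjTranspose_eq_transpose_of_trivial] at hEE
  have := trace_mul_nonneg_of_posSemidef
    (fun x => by simpa using hS.dotProduct_mulVec_nonneg x) hEE
  linarith

end quadratic

end Matrix

lemma psw_objective_eq {m n ι : Type*} [Fintype m] [DecidableEq m] [Fintype n] [Fintype ι]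
    (t : ℝ) (X : Matrix n ι ℝ) (W : Matrix m n ℝ) (M : Matrix m m ℝ) (Y : Matrix m ι ℝ) :
    -(2 / t) * (Xᵀ * Wᵀ * Y).trace + (Wᵀ * W).trace + (M * ((1 / t) • (Y * Yᵀ) - 1)).trace
      = (Wᵀ * W).trace - M.trace + ((M * (Y * Yᵀ)).trace - 2 * ((W * X)ᵀ * Y).trace) / t := by
  rw [transpose_mul, Matrix.mul_sub, Matrix.mul_smul, Matrix.mul_one, trace_sub, trace_smul,
    smul_eq_mul]
  ring

theorem psw_fractional_objective_general (n k T : ℕ) (hk : 0 < k) (hkT : k ≤ T)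
    (X : Matrix (Fin n) (Fin T) ℝ) (W : Matrix (Fin k) (Fin n) ℝ)
    (S : Matrix (Fin k) (Fin k) ℝ) (hS : S.PosSemidef)
    (hS2 : S ^ 2 = (1 / (T : ℝ)) • (W * X * Xᵀ * Wᵀ)) :
    (⨆ M : Matrix (Fin k) (Fin k) ℝ, ⨅ Y : Matrix (Fin k) (Fin T) ℝ,
        ((-(2 / (T : ℝ)) * (Xᵀ * Wᵀ * Y).trace + (Wᵀ * W).trace
            + (M * ((1 / (T : ℝ)) • (Y * Yᵀ) - 1)).trace : ℝ) : EReal))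
      = (((Wᵀ * W).trace - 2 * S.trace : ℝ) : EReal) := by
  have hT : 0 < T := hk.trans_le hkT
  have hT' : (0 : ℝ) < T := by exact_mod_cast hT
  have : Nonempty (Fin T) := ⟨⟨0, hT⟩⟩
  have hB : W * X * (W * X)ᵀ = (T : ℝ) • (S * S) := by
    rw [← sq, hS2, smul_smul, mul_one_div_cancel hT'.ne', one_smul, transpose_mul,
      ← Matrix.mul_assoc]
  simp_rw [psw_objective_eq]
  apply le_antisymm
  · refine iSup_le fun M => ?_
    obtain ⟨Y, hY⟩ := exists_trace_quadratic_le hT'.le hS.isHermitian hB M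
    refine iInf_le_of_le Y (EReal.coe_le_coe_iff.2 ?_)
    have := (div_le_iff₀' hT').2 hY
    linarith
  · refine le_iSup_of_le S (le_iInf fun Y => EReal.coe_le_coe_iff.2 ?_)
    have hY := trace_quadratic_ge hS hB Y
    rw [← mul_neg] at hY
    have := (le_div_iff₀' hT').2 hY
    linarith

/-- Eliminating outputs and Lagrange multipliers from the mixed PSW objective
`L(M, Y) = −(2/T) Tr(XᵀWᵀY) + Tr(WᵀW) + Tr(M((1/T)YYᵀ − I))` gives
`sup_M inf_Y L = Tr(WᵀW) − 2 Tr S` in the extended reals, where `S` is the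
positive semidefinite square root of `(1/T) W X Xᵀ Wᵀ`. -/
theorem psw_fractional_objective (n k T : ℕ) (hn : 0 < n) (hk : 0 < k) (hkT : k ≤ T)
    (X : Matrix (Fin n) (Fin T) ℝ) (W : Matrix (Fin k) (Fin n) ℝ)
    (S : Matrix (Fin k) (Fin k) ℝ) (hS : S.PosSemidef)
    (hS2 : S ^ 2 = (1 / (T : ℝ)) • (W * X * Xᵀ * Wᵀ)) :
    (⨆ M : Matrix (Fin k) (Fin k) ℝ, ⨅ Y : Matrix (Fin k) (Fin T) ℝ,
        ((-(2 / (T : ℝ)) * (Xᵀ * Wᵀ * Y).trace + (Wᵀ * W).trace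
            + (M * ((1 / (T : ℝ)) • (Y * Yᵀ) - 1)).trace : ℝ) : EReal))
      = (((Wᵀ * W).trace - 2 * S.trace : ℝ) : EReal) :=
  psw_fractional_objective_general n k T hk hkT X W S hS hS2
end
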